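/- Let c > 2 and set α = c − 2. Let i, j ∈ {+,−}, let Λ be a diamond domain and Δ = Δ(Λ). Define the probability measure P̄^{ij}_{Λ,α} on Ω^{spin,ij}_Λ × Ω^{SI,11}_Δ giving the pair (σ, η) probability proportional to α^{N_Δ(η)} 1{σ ∼ η}. Then the first marginal of P̄^{ij}_{Λ,α} is the spin measure P^{spin,ij}_{Λ,c} and the second marginal is the superimposed measure P^{SI,11}_{Δ,α,2}. -/

import Mathlib

open MeasureTheory Filter Topology
open scoped ENNReal

namespace SixVertex

/-- Vertices of `ℤ²`. -/
abbrev Vx : Type := ℤ × ℤ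
/-- Faces of `ℤ²`, i.e. elements of `(ℤ²)* = ℤ² + (1/2,1/2)`; the face `p` corresponds to the
point `p + (1/2,1/2)`, i.e. to the unit square with corners `p`, `p+(1,0)`, `p+(0,1)`, `p+(1,1)`. -/
abbrev Face : Type := ℤ × ℤ

/-- `ℓ¹` (= graph) distance between faces in `(ℤ²)*`. -/
def fdist (p q : Face) : ℕ := (p.1 - q.1).natAbs + (p.2 - q.2).natAbs

/-- `ℓ¹` (= graph) distance between vertices of `ℤ²`. -/
def vdist (x y : Vx) : ℕ := (x.1 - y.1).natAbs + (x.2 - y.2).natAbs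

/-- Adjacency in `ℤ²` (or in `(ℤ²)*`). -/
def VAdj (x y : Vx) : Prop := vdist x y = 1

/-- The diagonal edges `E(𝕃) ∪ E(𝕃*)`, encoded as pairs `(x, b)` where `x ∈ ℤ²` is the vertex
of `ℤ²` the edge passes through, and `b` tells which of the two diagonals at `x` it is.
The cross at a vertex `x` consists of the two edges `(x, false)` and `(x, true)`. -/
abbrev Edge : Type := Vx × Bool

/-- The two endpoints (faces) of a diagonal edge: `(x, false)` joins the faces `x - (1,1)` and
`x` (the two faces at `x` of the parity of `x`), while `(x, true)` joins `x - (1,0)` and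
`x - (0,1)`. -/
def ep (e : Edge) : Face × Face :=
  if e.2 then (e.1 - (1, 0), e.1 - (0, 1)) else (e.1 - (1, 1), e.1)

/-- The edge `e` belongs to `E(𝕃)` (otherwise it belongs to `E(𝕃*)`). -/
def inL (e : Edge) : Prop := (Even (e.1.1 + e.1.2) ↔ e.2 = false)

/-- Configurations `η ∈ {0,1}^{E(𝕃) ∪ E(𝕃*)}` (the pair `(η⁰, η¹)` is encoded as a single
function on all diagonal edges). -/
abbrev SIConf : Type := Edge → Bool

/-- The cross at `x` is open in `η`. -/
def OpenCross (η : SIConf) (x : Vx) : Prop := η (x, false) = true ∧ η (x, true) = true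

/-- No cross is closed in `η`, i.e. `η` is a superimposed configuration (`η ∈ Ω^SI`). -/
def NoClosedCross (η : SIConf) : Prop := ∀ x : Vx, η (x, false) = true ∨ η (x, true) = true

/-- Two faces joined by an open edge of `η`. -/
def OpenAdj (η : SIConf) (p q : Face) : Prop :=
  ∃ e : Edge, η e = true ∧ (ep e = (p, q) ∨ ep e = (q, p))

/-- Connectivity by open paths. -/
def ConnectedIn (η : SIConf) : Face → Face → Prop := Relation.ReflTransGen (OpenAdj η)

/-- The cluster of the face `p` in `η`. -/
def cluster (η : SIConf) (p : Face) : Set Face := {q | ConnectedIn η p q}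

/-- The face `p` is incident to some edge of `Δ`. -/
def TouchesDelta (Δ : Set Edge) (p : Face) : Prop := ∃ e ∈ Δ, (ep e).1 = p ∨ (ep e).2 = p

/-- `N_Δ(η)`: the number of open crosses of `η` having an edge in `Δ`. -/
noncomputable def NDelta (Δ : Set Edge) (η : SIConf) : ℕ :=
  Set.ncard {x : Vx | OpenCross η x ∧ ((x, false) ∈ Δ ∨ (x, true) ∈ Δ)}

/-- `k_Δ(η) = k_Δ(η⁰) + k_Δ(η¹)`: the total number of clusters of `η` (equivalently, of `η⁰`
in `𝕃` plus those of `η¹` in `𝕃*`, since open edges never join faces of different parity)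
containing a face incident to an edge of `Δ`. -/
noncomputable def kDelta (Δ : Set Edge) (η : SIConf) : ℕ :=
  Set.ncard {C : Set Face | ∃ p : Face, TouchesDelta Δ p ∧ C = cluster η p}

/-- `η` is a superimposed configuration agreeing with `τ` off `Δ` (`η ∈ Ω^{SI,τ}_Δ`). -/
def SIok (Δ : Set Edge) (τ : SIConf) (η : SIConf) : Prop :=
  NoClosedCross η ∧ ∀ e ∉ Δ, η e = τ e

/-- The weight `α^{N_Δ(η)} q^{k_Δ(η)}` of the superimposed model. -/
noncomputable def SIweight (Δ : Set Edge) (α q : ℝ) (η : SIConf) : ℝ≥0∞ :=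
  ENNReal.ofReal (α ^ NDelta Δ η * q ^ kDelta Δ η)

/-- The finite-volume superimposed measure `P^{SI,τ}_{Δ,α,q}`. -/
noncomputable def SIfin (Δ : Set Edge) (α q : ℝ) (τ : SIConf) : Measure SIConf :=
  (∑' η : {η : SIConf // SIok Δ τ η}, SIweight Δ α q η.1)⁻¹ •
    Measure.sum (fun η : {η : SIConf // SIok Δ τ η} => SIweight Δ α q η.1 • Measure.dirac η.1)

/-- The all-open ("wired-wired", `11`) boundary condition. -/
def wiredwired : SIConf := fun _ => true

/-! ### Diamond domains -/

/-- The diamond `Λ = {u : dist(u,v) ≤ n}` of faces. -/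
def diamond (v : Face) (n : ℕ) : Set Face := {u | fdist u v ≤ n}

/-- `(v, n)` determines a diamond domain: `v ∈ 𝕃` and `n` a positive even integer. -/
def IsDiamond (v : Face) (n : ℕ) : Prop := Even (v.1 + v.2) ∧ 0 < n ∧ Even n

/-- The edge of `E(𝕃)` in the cross at `x`. -/
def LEdgeAt (x : Vx) : Edge := if Even (x.1 + x.2) then (x, false) else (x, true)

/-- `Δ(Λ)`: edges of `𝕃` with both endpoints in `Λ`, together with their dual edges
(equivalently: the full crosses whose `𝕃`-edge has both endpoints in `Λ`). -/
def deltaOf (v : Face) (n : ℕ) : Set Edge :=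
  {e | (ep (LEdgeAt e.1)).1 ∈ diamond v n ∧ (ep (LEdgeAt e.1)).2 ∈ diamond v n}

/-! ### Spin configurations -/

/-- Spin configurations on the faces; `true` is the spin `+`, `false` the spin `-`. -/
abbrev SpinConf : Type := Face → Bool

/-- The ice rule: at each vertex of `ℤ²`, at least one of the two diagonals consists of
equal spins. -/
def IceRule (σ : SpinConf) : Prop :=
  ∀ x : Vx, σ (x - (1, 1)) = σ x ∨ σ (x - (1, 0)) = σ (x - (0, 1))

/-- `x` is a saddle point of `σ`: both diagonals at `x` have constant spin. -/
def Saddle (σ : SpinConf) (x : Vx) : Prop :=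
  σ (x - (1, 1)) = σ x ∧ σ (x - (1, 0)) = σ (x - (0, 1))

/-- The face `p` is incident to the vertex `x` of `ℤ²` (i.e. `x` is a corner of `p`). -/
def FaceInc (p : Face) (x : Vx) : Prop :=
  ∃ a ∈ ({0, 1} : Set ℤ), ∃ b ∈ ({0, 1} : Set ℤ), p = x - (a, b)

/-- Vertices of `𝛬̂`: vertices of `ℤ²` on or inside the circuit `∂†Λ`, i.e. corners of
faces of `Λ`. -/
def HatVert (v : Face) (n : ℕ) (x : Vx) : Prop := ∃ p ∈ diamond v n, FaceInc p x

/-- Internal vertices of `𝛬̂`: vertices all of whose four incident `ℤ²`-edges belong to the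
induced subgraph `𝛬̂`. -/
def InternalVert (v : Face) (n : ℕ) (x : Vx) : Prop :=
  HatVert v n x ∧ ∀ y : Vx, VAdj x y → HatVert v n y

/-- `#saddle_Λ(σ)`: the number of saddle points of `σ` among internal vertices of `𝛬̂`. -/
noncomputable def saddleCount (v : Face) (n : ℕ) (σ : SpinConf) : ℕ :=
  Set.ncard {x : Vx | InternalVert v n x ∧ Saddle σ x}

/-- `Ω^{spin,ij}_Λ`: spin configurations satisfying the ice rule, equal to `i` on the outer
boundary of `Λ` and on all of `𝕃*` outside `Λ`, and equal to `j` on the inner boundary of `Λ`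
and on all of `𝕃` outside `Λ`.  (All faces at distance `≥ n` from the center receive the
boundary spin of their sublattice.) -/
def OmegaSpin (v : Face) (n : ℕ) (i j : Bool) (σ : SpinConf) : Prop :=
  IceRule σ ∧ ∀ p : Face, n ≤ fdist p v → σ p = (if Even (p.1 + p.2) then j else i)

/-- The weight `c^{#saddle_Λ(σ)}`. -/
noncomputable def spinWeight (v : Face) (n : ℕ) (c : ℝ) (σ : SpinConf) : ℝ≥0∞ :=
  ENNReal.ofReal (c ^ saddleCount v n σ)

/-- The finite-volume spin measure `P^{spin,ij}_{Λ,c}`. -/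
noncomputable def spinFin (v : Face) (n : ℕ) (c : ℝ) (i j : Bool) : Measure SpinConf :=
  (∑' σ : {σ : SpinConf // OmegaSpin v n i j σ}, spinWeight v n c σ.1)⁻¹ •
    Measure.sum (fun σ : {σ : SpinConf // OmegaSpin v n i j σ} =>
      spinWeight v n c σ.1 • Measure.dirac σ.1)

/-- Compatibility `σ ∼ η`: every open edge of `η` has endpoints with equal spins. -/
def Compat (σ : SpinConf) (η : SIConf) : Prop :=
  ∀ e : Edge, η e = true → σ (ep e).1 = σ (ep e).2

/-! ### Bernoulli site percolation on `ℤ²` and its critical probability -/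

/-- `ν` is the law of i.i.d. Bernoulli(`p`) site percolation on `ℤ²`. -/
def IsBernoulliField (p : ℝ) (ν : Measure (Vx → Bool)) : Prop :=
  IsProbabilityMeasure ν ∧
    ∀ (S : Finset Vx) (s : Vx → Bool),
      ν {ω | ∀ x ∈ S, ω x = s x} =
        ∏ x ∈ S, (if s x = true then ENNReal.ofReal p else ENNReal.ofReal (1 - p))

/-- Site-percolation adjacency: neighbouring open sites. -/
def SiteOpenAdj (ω : Vx → Bool) (x y : Vx) : Prop := VAdj x y ∧ ω x = true ∧ ω y = true

/-- The open cluster of a site. -/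
def siteCluster (ω : Vx → Bool) (x : Vx) : Set Vx :=
  {y | Relation.ReflTransGen (SiteOpenAdj ω) x y}

/-- The critical probability `p_c` of Bernoulli site percolation on `ℤ²`: the supremum of
`p ∈ [0,1]` for which Bernoulli(`p`) site percolation a.s. has no infinite open cluster. -/
noncomputable def pcSite : ℝ :=
  sSup {p : ℝ | 0 ≤ p ∧ p ≤ 1 ∧ ∀ ν : Measure (Vx → Bool), IsBernoulliField p ν →
    ν {ω | ∃ x, ω x = true ∧ (siteCluster ω x).Infinite} = 0}

/-! ### Infinite-volume limits -/

/-- A sequence of diamond domains increasing to `(ℤ²)*`. -/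
def DiamondExhaustion (v : ℕ → Face) (n : ℕ → ℕ) : Prop :=
  (∀ k, IsDiamond (v k) (n k)) ∧
  (∀ k, diamond (v k) (n k) ⊆ diamond (v (k + 1)) (n (k + 1))) ∧
  (∀ u : Face, ∃ k, u ∈ diamond (v k) (n k))

/-- `P` is the weak limit of the finite-volume superimposed measures with boundary condition
`τ` along any sequence of diamond domains increasing to `(ℤ²)*`. -/
def IsSILimitFor (α q : ℝ) (τ : SIConf) (P : Measure SIConf) : Prop :=
  ∀ (v : ℕ → Face) (n : ℕ → ℕ), DiamondExhaustion v n →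
    ∀ f : SIConf → ℝ, Continuous f → (∃ M, ∀ η, |f η| ≤ M) →
      Tendsto (fun k => ∫ η, f η ∂(SIfin (deltaOf (v k) (n k)) α q τ)) atTop
        (nhds (∫ η, f η ∂P))

/-- `P` is the infinite-volume superimposed measure `P^{SI}_{α,q}`: the common weak limit of
the finite-volume measures over all boundary conditions. -/
def IsSILimit (α q : ℝ) (P : Measure SIConf) : Prop :=
  IsProbabilityMeasure P ∧ ∀ τ : SIConf, NoClosedCross τ → IsSILimitFor α q τ P

/-- `P` is the weak limit `P^{spin,ij}_c` of the finite-volume spin measures along any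
sequence of diamond domains increasing to `(ℤ²)*`. -/
def IsSpinLimit (c : ℝ) (i j : Bool) (P : Measure SpinConf) : Prop :=
  IsProbabilityMeasure P ∧
    ∀ (v : ℕ → Face) (n : ℕ → ℕ), DiamondExhaustion v n →
      ∀ f : SpinConf → ℝ, Continuous f → (∃ M, ∀ σ, |f σ| ≤ M) →
        Tendsto (fun k => ∫ σ, f σ ∂(spinFin (v k) (n k) c i j)) atTop (nhds (∫ σ, f σ ∂P))

end SixVertex

namespace SixVertex

/-- The pairs charged by the Edwards–Sokal-type coupling `P̄^{ij}_{Λ,α}`: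
`σ ∈ Ω^{spin,ij}_Λ`, `η ∈ Ω^{SI,11}_{Δ(Λ)}`, and `σ ∼ η`. -/
def OkPair (v : Face) (n : ℕ) (i j : Bool) (p : SpinConf × SIConf) : Prop :=
  OmegaSpin v n i j p.1 ∧ SIok (deltaOf v n) wiredwired p.2 ∧ Compat p.1 p.2

/-- The coupling `P̄^{ij}_{Λ,α}`, giving the pair `(σ, η)` probability proportional to
`α^{N_Δ(η)} 1{σ ∼ η}`. -/
noncomputable def couplingFin (v : Face) (n : ℕ) (α : ℝ) (i j : Bool) :
    Measure (SpinConf × SIConf) :=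
  (∑' p : {p : SpinConf × SIConf // OkPair v n i j p},
      ENNReal.ofReal (α ^ NDelta (deltaOf v n) p.1.2))⁻¹ •
    Measure.sum (fun p : {p : SpinConf × SIConf // OkPair v n i j p} =>
      ENNReal.ofReal (α ^ NDelta (deltaOf v n) p.1.2) • Measure.dirac p.1)

end SixVertex

/-!
Both marginals are computed fiberwise. For fixed `σ`, the crosses of `Δ` are independent: at a
saddle point of `σ` either diagonal or both may be open, contributing `1 + 1 + α = c`, and
elsewhere only the constant diagonal may be open, contributing `1`. Crosses outside `Δ` are open,
which is consistent with `σ` because the boundary conditions make them saddle points.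

For fixed `η`, a compatible `σ` is constant on clusters. Away from `Λ` all edges are open, so the
clusters reaching that region merge into one cluster of `𝕃` and one of `𝕃*`, on which `σ` is
fixed by the boundary conditions, while each of the other `k_Δ(η) - 2` clusters carries a free
spin. The fiber therefore has `2 ^ k_Δ(η) / 4` elements, and the factor `1 / 4` disappears after
normalization.
-/

section NormalizedWeightedCount

variable {α β : Type*}

noncomputable def normalizedWeightedCount [MeasurableSpace α] (P : α → Prop) (w : α → ℝ≥0∞) :
    Measure α :=
  (∑' a : {a // P a}, w a)⁻¹ • Measure.sum (fun a : {a // P a} => w a • Measure.dirac a.1)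

lemma normalizedWeightedCount_apply [MeasurableSpace α] (P : α → Prop) (w : α → ℝ≥0∞)
    {s : Set α} (hs : MeasurableSet s) :
    normalizedWeightedCount P w s =
      (∑' a : {a // P a}, w a)⁻¹ * ∑' a : {a // P a}, w a * s.indicator 1 a.1 := by
  simp only [normalizedWeightedCount, Measure.smul_apply, Measure.sum_apply _ hs, smul_eq_mul,
    Measure.dirac_apply' _ hs]

lemma tsum_eq_tsum_fiberwise {P : α → Prop} {Q : β → Prop} (f : α → β)
    (hPQ : ∀ a, P a → Q (f a)) (g : α → ℝ≥0∞) :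
    ∑' a : {a // P a}, g a = ∑' b : {b // Q b}, ∑' a : {a // P a ∧ f a = b}, g a := by
  let e : (Σ b : {b // Q b}, {a // P a ∧ f a = b}) ≃ {a // P a} :=
    { toFun := fun x => ⟨x.2.1, x.2.2.1⟩
      invFun := fun a => ⟨⟨f a, hPQ a a.2⟩, ⟨a, a.2, rfl⟩⟩
      left_inv := by rintro ⟨⟨b, hb⟩, a, ha, hab : f a = b⟩; subst hab; rfl
      right_inv := fun _ => rfl }
  rw [← e.tsum_eq, ENNReal.tsum_sigma']
  rfl

theorem map_normalizedWeightedCount [MeasurableSpace α] [MeasurableSpace β] {f : α → β}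
    (hf : Measurable f) {P : α → Prop} {Q : β → Prop} {w : α → ℝ≥0∞} {u : β → ℝ≥0∞}
    {K : ℝ≥0∞} (hK0 : K ≠ 0) (hK : K ≠ ⊤)
    (hPQ : ∀ a, P a → Q (f a))
    (hfiber : ∀ b, Q b → K * ∑' a : {a // P a ∧ f a = b}, w a = u b) :
    (normalizedWeightedCount P w).map f = normalizedWeightedCount Q u := by
  have hsum : ∀ g : β → ℝ≥0∞,
      ∑' b : {b // Q b}, u b * g b = K * ∑' a : {a // P a}, w a * g (f a) := by
    intro g
    rw [tsum_eq_tsum_fiberwise f hPQ (fun a => w a * g (f a)), ← ENNReal.tsum_mul_left]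
    refine tsum_congr fun b => ?_
    rw [← hfiber b b.2, mul_assoc, ← ENNReal.tsum_mul_right]
    congr 1
    exact tsum_congr fun a => by rw [a.2.2]
  have hZ := hsum 1
  simp only [Pi.one_apply, mul_one] at hZ
  ext s hs
  rw [Measure.map_apply hf hs, normalizedWeightedCount_apply _ _ (hf hs),
    normalizedWeightedCount_apply _ _ hs, hsum, hZ, ENNReal.mul_inv (Or.inl hK0) (Or.inl hK),
    mul_mul_mul_comm, ENNReal.inv_mul_cancel hK0 hK, one_mul]
  rfl

lemma tsum_fiber_fst (P : α × β → Prop) (w : α × β → ℝ≥0∞) (a : α) :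
    ∑' p : {p // P p ∧ p.1 = a}, w p = ∑' b : {b // P (a, b)}, w (a, b) :=
  (Equiv.tsum_eq (show {b // P (a, b)} ≃ {p // P p ∧ p.1 = a} from
    { toFun := fun b => ⟨(a, b.1), b.2, rfl⟩
      invFun := fun p => ⟨p.1.2, by obtain ⟨⟨_, b⟩, h, rfl⟩ := p; exact h⟩
      left_inv := fun _ => rfl
      right_inv := by rintro ⟨⟨_, b⟩, h, rfl⟩; rfl }) (fun p => w p)).symm

lemma tsum_fiber_snd (P : α × β → Prop) (w : α × β → ℝ≥0∞) (b : β) :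
    ∑' p : {p // P p ∧ p.2 = b}, w p = ∑' a : {a // P (a, b)}, w (a, b) :=
  (Equiv.tsum_eq (show {a // P (a, b)} ≃ {p // P p ∧ p.2 = b} from
    { toFun := fun a => ⟨(a.1, b), a.2, rfl⟩
      invFun := fun p => ⟨p.1.1, by obtain ⟨⟨a, _⟩, h, rfl⟩ := p; exact h⟩
      left_inv := fun _ => rfl
      right_inv := by rintro ⟨⟨a, _⟩, h, rfl⟩; rfl }) (fun p => w p)).symm

theorem map_fst_normalizedWeightedCount [MeasurableSpace α] [MeasurableSpace β]
    {P : α × β → Prop} {Q : α → Prop} {w : α × β → ℝ≥0∞} {u : α → ℝ≥0∞} {K : ℝ≥0∞}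
    (hK0 : K ≠ 0) (hK : K ≠ ⊤) (hPQ : ∀ p, P p → Q p.1)
    (hfiber : ∀ a, Q a → K * ∑' b : {b // P (a, b)}, w (a, b) = u a) :
    (normalizedWeightedCount P w).map Prod.fst = normalizedWeightedCount Q u :=
  map_normalizedWeightedCount measurable_fst hK0 hK hPQ fun a ha => by
    rw [tsum_fiber_fst, hfiber a ha]

theorem map_snd_normalizedWeightedCount [MeasurableSpace α] [MeasurableSpace β]
    {P : α × β → Prop} {Q : β → Prop} {w : α × β → ℝ≥0∞} {u : β → ℝ≥0∞} {K : ℝ≥0∞}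
    (hK0 : K ≠ 0) (hK : K ≠ ⊤) (hPQ : ∀ p, P p → Q p.2)
    (hfiber : ∀ b, Q b → K * ∑' a : {a // P (a, b)}, w (a, b) = u b) :
    (normalizedWeightedCount P w).map Prod.snd = normalizedWeightedCount Q u :=
  map_normalizedWeightedCount measurable_snd hK0 hK hPQ fun b hb => by
    rw [tsum_fiber_snd, hfiber b hb]

end NormalizedWeightedCount

namespace SixVertex

open scoped Finset

variable {v : Face} {n : ℕ} {i j : Bool} {η : SIConf} {p q : Face}

instance (σ : SpinConf) (x : Vx) : Decidable (Saddle σ x) :=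
  inferInstanceAs (Decidable (_ ∧ _))

instance (η : SIConf) (x : Vx) : Decidable (OpenCross η x) :=
  inferInstanceAs (Decidable (_ ∧ _))

lemma ep_false (x : Vx) : ep (x, false) = (x - (1, 1), x) := rfl

lemma ep_true (x : Vx) : ep (x, true) = (x - (1, 0), x - (0, 1)) := rfl

lemma fdist_def (p q : Face) : fdist p q = (p.1 - q.1).natAbs + (p.2 - q.2).natAbs := rfl

def CrossInDelta (v : Face) (n : ℕ) (x : Vx) : Prop :=
  (ep (LEdgeAt x)).1 ∈ diamond v n ∧ (ep (LEdgeAt x)).2 ∈ diamond v n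

lemma mem_deltaOf {e : Edge} : e ∈ deltaOf v n ↔ CrossInDelta v n e.1 := Iff.rfl

lemma crossInDelta_iff (hΛ : IsDiamond v n) (x : Vx) :
    CrossInDelta v n x ↔ fdist (x - (1, 1)) v ≤ n + 1 ∧ fdist (x - (1, 0)) v ≤ n + 1 ∧
      fdist (x - (0, 1)) v ≤ n + 1 ∧ fdist x v ≤ n + 1 := by
  obtain ⟨hv, -, hn⟩ := hΛ
  rw [Int.even_iff] at hv
  rw [Nat.even_iff] at hn
  unfold CrossInDelta LEdgeAt diamond
  split_ifs with hx <;> rw [Int.even_iff] at hx <;>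
    simp only [ep_false, ep_true, Set.mem_ofPred_eq, fdist_def, Prod.fst_sub, Prod.snd_sub] <;>
    omega

lemma hatVert_iff (x : Vx) :
    HatVert v n x ↔ fdist (x - (1, 1)) v ≤ n ∨ fdist (x - (1, 0)) v ≤ n ∨
      fdist (x - (0, 1)) v ≤ n ∨ fdist x v ≤ n := by
  constructor
  · rintro ⟨p, hp, a, ha, b, hb, rfl⟩
    simp only [Set.mem_insert_iff, Set.mem_singleton_iff] at ha hb
    rcases ha with rfl | rfl <;> rcases hb with rfl | rfl <;>
      simp_all [diamond, Prod.mk_zero_zero]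
  · rintro (h | h | h | h) <;> refine ⟨_, h, ?_⟩ <;> simp [FaceInc, Prod.mk_zero_zero]

lemma vAdj_iff (x y : Vx) : VAdj x y ↔
    y = x + (1, 0) ∨ y = x - (1, 0) ∨ y = x + (0, 1) ∨ y = x - (0, 1) := by
  simp only [VAdj, vdist, Prod.ext_iff, Prod.fst_add, Prod.snd_add, Prod.fst_sub, Prod.snd_sub]
  omega

lemma internalVert_iff_crossInDelta (hΛ : IsDiamond v n) (x : Vx) :
    InternalVert v n x ↔ CrossInDelta v n x := by
  have hI : InternalVert v n x ↔ HatVert v n x ∧ HatVert v n (x + (1, 0)) ∧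
      HatVert v n (x - (1, 0)) ∧ HatVert v n (x + (0, 1)) ∧ HatVert v n (x - (0, 1)) := by
    simp only [InternalVert, vAdj_iff, forall_eq_or_imp, forall_eq]
  rw [hI, crossInDelta_iff hΛ]
  obtain ⟨hv, -, hn⟩ := hΛ
  rw [Int.even_iff] at hv
  rw [Nat.even_iff] at hn
  simp only [hatVert_iff, fdist_def, Prod.fst_sub, Prod.snd_sub, Prod.fst_add, Prod.snd_add]
  omega

lemma fdist_ge_of_not_crossInDelta (hΛ : IsDiamond v n) {x : Vx} (hx : ¬ CrossInDelta v n x) :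
    n ≤ fdist (x - (1, 1)) v ∧ n ≤ fdist (x - (1, 0)) v ∧ n ≤ fdist (x - (0, 1)) v ∧
      n ≤ fdist x v := by
  rw [crossInDelta_iff hΛ] at hx
  simp only [fdist_def, Prod.fst_sub, Prod.snd_sub] at hx ⊢
  omega

lemma fdist_le_of_crossInDelta {x : Vx} (hx : CrossInDelta v n x) : fdist x v ≤ n + 1 := by
  revert hx
  unfold CrossInDelta LEdgeAt diamond
  split_ifs <;> simp only [ep_false, ep_true, Set.mem_ofPred_eq, fdist_def, Prod.fst_sub,
    Prod.snd_sub] <;> omega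

lemma finite_fdist_le (v : Face) (m : ℕ) : {p : Face | fdist p v ≤ m}.Finite := by
  refine (Set.finite_Icc (v - ((m : ℤ), (m : ℤ))) (v + ((m : ℤ), (m : ℤ)))).subset
    fun p hp => ?_
  simp only [Set.mem_ofPred_eq, fdist_def] at hp
  simp only [Set.mem_Icc, Prod.le_def, Prod.fst_sub, Prod.snd_sub, Prod.fst_add, Prod.snd_add]
  omega

lemma finite_setOf_crossInDelta (v : Face) (n : ℕ) : {x | CrossInDelta v n x}.Finite :=
  (finite_fdist_le v (n + 1)).subset fun _ => fdist_le_of_crossInDelta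

lemma notMem_deltaOf_of_far (hΛ : IsDiamond v n) {e : Edge}
    (h : n + 2 ≤ fdist (ep e).1 v ∨ n + 2 ≤ fdist (ep e).2 v) : e ∉ deltaOf v n := by
  obtain ⟨x, b⟩ := e
  rw [mem_deltaOf, crossInDelta_iff hΛ]
  cases b <;> simp only [ep_false, ep_true, fdist_def, Prod.fst_sub, Prod.snd_sub] at h ⊢ <;>
    omega

lemma exists_ep_of_diagonal (h1 : (p.1 - q.1).natAbs = 1)
    (h2 : (p.2 - q.2).natAbs = 1) : ∃ e : Edge, ep e = (p, q) ∨ ep e = (q, p) := by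
  rcases Int.natAbs_eq_iff.mp h1 with h1 | h1 <;> rcases Int.natAbs_eq_iff.mp h2 with h2 | h2
  · exact ⟨(p, false), .inr (by simp [ep_false, Prod.ext_iff]; omega)⟩
  · exact ⟨(p + (0, 1), true), .inr (by simp [ep_true, Prod.ext_iff]; omega)⟩
  · exact ⟨(q + (0, 1), true), .inl (by simp [ep_true, Prod.ext_iff]; omega)⟩
  · exact ⟨(q, false), .inl (by simp [ep_false, Prod.ext_iff]; omega)⟩

def boundarySpin (i j : Bool) (p : Face) : Bool := if Even (p.1 + p.2) then j else i

lemma boundarySpin_congr (h : (p.1 + p.2) % 2 = (q.1 + q.2) % 2) :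
    boundarySpin i j p = boundarySpin i j q := by
  simp only [boundarySpin, Int.even_iff, h]

lemma saddle_iff_forall_ep {σ : SpinConf} {x : Vx} :
    Saddle σ x ↔ ∀ b, σ (ep (x, b)).1 = σ (ep (x, b)).2 := by
  simp [Saddle, Bool.forall_bool, ep_false, ep_true, and_comm]

lemma saddle_of_not_crossInDelta (hΛ : IsDiamond v n) {σ : SpinConf}
    (hσ : OmegaSpin v n i j σ) {x : Vx} (hx : ¬ CrossInDelta v n x) : Saddle σ x := by
  obtain ⟨h11, h10, h01, h00⟩ := fdist_ge_of_not_crossInDelta hΛ hx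
  refine ⟨?_, ?_⟩
  · rw [hσ.2 _ h11, hσ.2 _ h00]
    exact boundarySpin_congr (by simp only [Prod.fst_sub, Prod.snd_sub]; omega)
  · rw [hσ.2 _ h10, hσ.2 _ h01]
    exact boundarySpin_congr (by simp only [Prod.fst_sub, Prod.snd_sub]; omega)

noncomputable def crossesInDelta (v : Face) (n : ℕ) : Finset Vx :=
  (finite_setOf_crossInDelta v n).toFinset

lemma mem_crossesInDelta {x : Vx} : x ∈ crossesInDelta v n ↔ CrossInDelta v n x :=
  Set.Finite.mem_toFinset _

/-- The admissible states `b ↦ η (x, b)` of the cross at `x` in a configuration compatible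
with `σ`. -/
def localStates (σ : SpinConf) (x : Vx) : Finset (Bool → Bool) :=
  Finset.univ.filter fun s => (s false = true ∨ s true = true) ∧
    ∀ b, s b = true → σ (ep (x, b)).1 = σ (ep (x, b)).2

noncomputable def ofLocalStates {σ : SpinConf}
    (g : (x : crossesInDelta v n) → localStates σ x) : SIConf :=
  fun e => if h : e.1 ∈ crossesInDelta v n then (g ⟨e.1, h⟩).1 e.2 else true

lemma ofLocalStates_of_mem {σ : SpinConf} (g : (x : crossesInDelta v n) → localStates σ x)
    {x : Vx} (hx : x ∈ crossesInDelta v n) (b : Bool) :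
    ofLocalStates g (x, b) = (g ⟨x, hx⟩).1 b :=
  dif_pos hx

lemma ofLocalStates_of_notMem {σ : SpinConf} (g : (x : crossesInDelta v n) → localStates σ x)
    {x : Vx} (hx : x ∉ crossesInDelta v n) (b : Bool) : ofLocalStates g (x, b) = true :=
  dif_neg hx

noncomputable def compatSIEquiv (hΛ : IsDiamond v n) {σ : SpinConf}
    (hσ : OmegaSpin v n i j σ) :
    {η : SIConf // SIok (deltaOf v n) wiredwired η ∧ Compat σ η} ≃
      ((x : crossesInDelta v n) → localStates σ x) where
  toFun η x := ⟨fun b => η.1 (x, b), by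
    simp only [localStates, Finset.mem_filter, Finset.mem_univ, true_and]
    exact ⟨η.2.1.1 x, fun b hb => η.2.2 (x, b) hb⟩⟩
  invFun g := ⟨ofLocalStates g, by
    refine ⟨⟨fun x => ?_, fun ⟨x, b⟩ he => ?_⟩, fun ⟨x, b⟩ hb => ?_⟩
    · by_cases h : x ∈ crossesInDelta v n
      · simp only [ofLocalStates_of_mem g h]
        exact (Finset.mem_filter.mp (g ⟨x, h⟩).2).2.1
      · exact .inl (ofLocalStates_of_notMem g h false)
    · exact ofLocalStates_of_notMem g (mem_crossesInDelta.not.mpr (mem_deltaOf.not.mp he)) b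
    · by_cases h : x ∈ crossesInDelta v n
      · rw [ofLocalStates_of_mem g h] at hb
        exact (Finset.mem_filter.mp (g ⟨x, h⟩).2).2.2 b hb
      · exact saddle_iff_forall_ep.mp
          (saddle_of_not_crossInDelta hΛ hσ (mem_crossesInDelta.not.mp h)) b⟩
  left_inv η := by
    refine Subtype.ext (funext fun ⟨x, b⟩ => ?_)
    dsimp only
    by_cases h : x ∈ crossesInDelta v n
    · exact ofLocalStates_of_mem _ h b
    · exact (ofLocalStates_of_notMem _ h b).trans
        (η.2.1.2 (x, b) (mem_deltaOf.not.mpr (mem_crossesInDelta.not.mp h))).symm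
  right_inv g := funext fun x => Subtype.ext (funext fun b => ofLocalStates_of_mem g x.2 b)

lemma sum_localStates {σ : SpinConf} {x : Vx} {α : ℝ} (hα : 0 ≤ α)
    (hice : σ (x - (1, 1)) = σ x ∨ σ (x - (1, 0)) = σ (x - (0, 1))) :
    ∑ s ∈ localStates σ x, (if s false = true ∧ s true = true then ENNReal.ofReal α else 1) =
      if Saddle σ x then ENNReal.ofReal (α + 2) else 1 := by
  have h3 : ENNReal.ofReal α + 1 + 1 = ENNReal.ofReal (α + 2) := by
    rw [ENNReal.ofReal_add hα zero_le_two, add_assoc, ENNReal.ofReal_ofNat, one_add_one_eq_two]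
  rw [localStates, Finset.sum_filter, ← (Equiv.boolArrowEquivProd Bool).symm.sum_comp,
    Fintype.sum_prod_type]
  by_cases h0 : σ (x - (1, 1)) = σ x <;> by_cases h1 : σ (x - (1, 0)) = σ (x - (0, 1)) <;>
    simp [Saddle, Bool.forall_bool, ep_false, ep_true, h0, h1, h3] at hice ⊢

lemma nDelta_eq_card (η : SIConf) :
    NDelta (deltaOf v n) η = #{x ∈ crossesInDelta v n | OpenCross η x} := by
  rw [NDelta, ← Set.ncard_coe_finset]
  congr 1
  ext x
  simp only [Finset.coe_filter, mem_crossesInDelta, Set.mem_ofPred_eq, mem_deltaOf, or_self,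
    and_comm]

lemma saddleCount_eq_card (hΛ : IsDiamond v n) (σ : SpinConf) :
    saddleCount v n σ = #{x ∈ crossesInDelta v n | Saddle σ x} := by
  rw [saddleCount, ← Set.ncard_coe_finset]
  congr 1
  ext x
  simp only [Finset.coe_filter, mem_crossesInDelta, Set.mem_ofPred_eq,
    internalVert_iff_crossInDelta hΛ]

theorem tsum_compat_eq_spinWeight (hΛ : IsDiamond v n) {c : ℝ} (hc : 2 ≤ c) {σ : SpinConf}
    (hσ : OmegaSpin v n i j σ) :
    ∑' η : {η // SIok (deltaOf v n) wiredwired η ∧ Compat σ η},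
      ENNReal.ofReal ((c - 2) ^ NDelta (deltaOf v n) η) = spinWeight v n c σ := by
  obtain ⟨α, hα, rfl⟩ : ∃ α, 0 ≤ α ∧ c = α + 2 := ⟨c - 2, by linarith, by ring⟩
  rw [add_sub_cancel_right]
  have hweight : ∀ g : (x : crossesInDelta v n) → localStates σ x,
      ENNReal.ofReal (α ^ NDelta (deltaOf v n) (ofLocalStates g)) =
        ∏ x, if (g x).1 false = true ∧ (g x).1 true = true then ENNReal.ofReal α else 1 := by
    intro g
    rw [nDelta_eq_card, ENNReal.ofReal_pow hα, ← Finset.prod_const, Finset.prod_filter,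
      ← Finset.prod_coe_sort]
    refine Finset.prod_congr rfl fun x _ => ?_
    simp only [OpenCross, ofLocalStates_of_mem g x.2]
  rw [← (compatSIEquiv hΛ hσ).symm.tsum_eq, tsum_fintype]
  simp only [compatSIEquiv, Equiv.coe_fn_symm_mk, hweight]
  rw [← Fintype.prod_sum (fun (x : crossesInDelta v n) (s : localStates σ x) =>
    if s.1 false = true ∧ s.1 true = true then ENNReal.ofReal α else 1)]
  simp only [Finset.sum_coe_sort (localStates σ _)
    (fun s => if s false = true ∧ s true = true then ENNReal.ofReal α else 1)]
  simp only [sum_localStates hα (hσ.1 _)]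
  rw [Finset.prod_coe_sort (crossesInDelta v n)
      (fun x => if Saddle σ x then ENNReal.ofReal (α + 2) else 1),
    ← Finset.prod_filter, Finset.prod_const, ← saddleCount_eq_card hΛ, spinWeight,
    ENNReal.ofReal_pow (by positivity)]

lemma OpenAdj.symm (h : OpenAdj η p q) : OpenAdj η q p :=
  let ⟨e, he, hpq⟩ := h
  ⟨e, he, hpq.symm⟩

lemma ConnectedIn.symm (h : ConnectedIn η p q) : ConnectedIn η q p := by
  induction h with
  | refl => exact .refl
  | tail _ hqr ih => exact .head hqr.symm ih

lemma ConnectedIn.trans {r : Face} (hpq : ConnectedIn η p q) (hqr : ConnectedIn η q r) :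
    ConnectedIn η p r :=
  Relation.ReflTransGen.trans hpq hqr

lemma mem_cluster_self (η : SIConf) (p : Face) : p ∈ cluster η p :=
  Relation.ReflTransGen.refl

lemma cluster_eq_of_connectedIn (h : ConnectedIn η p q) : cluster η p = cluster η q :=
  Set.ext fun _ => ⟨h.symm.trans, h.trans⟩

lemma ConnectedIn.apply_eq {γ : Type*} {f : Face → γ}
    (hf : ∀ p q, OpenAdj η p q → f p = f q) (h : ConnectedIn η p q) : f p = f q := by
  induction h with
  | refl => rfl
  | tail _ hqr ih => exact ih.trans (hf _ _ hqr)

lemma ConnectedIn.parity_eq (h : ConnectedIn η p q) : (p.1 + p.2) % 2 = (q.1 + q.2) % 2 := by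
  refine h.apply_eq (f := fun p : Face => (p.1 + p.2) % 2) fun p q ⟨⟨x, b⟩, _, hpq⟩ => ?_
  cases b <;> rcases hpq with hpq | hpq <;>
    simp only [ep_false, ep_true, Prod.ext_iff, Prod.fst_sub, Prod.snd_sub] at hpq <;> omega

lemma ConnectedIn.spin_eq {σ : SpinConf} (hσ : Compat σ η) (h : ConnectedIn η p q) :
    σ p = σ q := by
  refine h.apply_eq fun p q ⟨e, he, hpq⟩ => ?_
  rcases hpq with hpq | hpq <;> have := hσ e he <;> rw [hpq] at this
  exacts [this, this.symm]

lemma exists_diagonal_outward (v p : Face) : ∃ q : Face, (p.1 - q.1).natAbs = 1 ∧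
    (p.2 - q.2).natAbs = 1 ∧ fdist q v = fdist p v + 2 := by
  refine ⟨(p.1 + if v.1 ≤ p.1 then 1 else -1, p.2 + if v.2 ≤ p.2 then 1 else -1), ?_⟩
  simp only [fdist_def]
  split_ifs <;> omega

lemma exists_diagonal_along_fdist_eq {m : ℕ} (hp : fdist p v = m) (hlt : p.1 - v.1 < m) :
    ∃ q : Face, (p.1 - q.1).natAbs = 1 ∧ (p.2 - q.2).natAbs = 1 ∧ q.1 = p.1 + 1 ∧
      fdist q v = m := by
  simp only [fdist_def] at hp ⊢
  by_cases h : v.1 ≤ p.1 ∧ v.2 < p.2 ∨ p.1 < v.1 ∧ p.2 ≤ v.2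
  · exact ⟨(p.1 + 1, p.2 - 1), by omega⟩
  · exact ⟨(p.1 + 1, p.2 + 1), by omega⟩

lemma openAdj_of_far (hΛ : IsDiamond v n) (hη : SIok (deltaOf v n) wiredwired η)
    (h1 : (p.1 - q.1).natAbs = 1) (h2 : (p.2 - q.2).natAbs = 1)
    (hq : n + 2 ≤ fdist q v) : OpenAdj η p q := by
  obtain ⟨e, he⟩ := exists_ep_of_diagonal h1 h2
  refine ⟨e, hη.2 e (notMem_deltaOf_of_far hΛ ?_), he⟩
  rcases he with he | he <;> simp [he, hq]

lemma exists_connectedIn_fdist_add (hΛ : IsDiamond v n) (hη : SIok (deltaOf v n) wiredwired η)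
    (hp : n ≤ fdist p v) (k : ℕ) :
    ∃ q, ConnectedIn η p q ∧ fdist q v = fdist p v + 2 * k := by
  induction k generalizing p with
  | zero => exact ⟨p, .refl, rfl⟩
  | succ k ih =>
    obtain ⟨p', h1, h2, hp'⟩ := exists_diagonal_outward v p
    obtain ⟨q, hq, hqd⟩ := ih (p := p') (by omega)
    exact ⟨q, .head (openAdj_of_far hΛ hη h1 h2 (by omega)) hq, by omega⟩

lemma connectedIn_of_fdist_eq (hΛ : IsDiamond v n) (hη : SIok (deltaOf v n) wiredwired η)
    {m : ℕ} (hm : n + 2 ≤ m) (hp : fdist p v = m) :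
    ConnectedIn η p (v.1 + m, v.2) := by
  have hcorner : ∀ p : Face, fdist p v = m → p.1 - v.1 = m → p = (v.1 + m, v.2) := by
    intro p hp hend
    simp only [fdist_def, Prod.ext_iff] at hp ⊢
    omega
  suffices ∀ r : ℕ, ∀ p : Face, fdist p v = m → (m : ℤ) - (p.1 - v.1) ≤ r →
      ConnectedIn η p (v.1 + m, v.2) from this _ p hp (Int.self_le_toNat _)
  intro r
  induction r with
  | zero =>
    intro p hp hr
    exact hcorner p hp (by simp only [fdist_def] at hp; omega) ▸ .refl
  | succ r ih =>
    intro p hp hr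
    by_cases hend : p.1 - v.1 = m
    · exact hcorner p hp hend ▸ .refl
    · obtain ⟨q, h1, h2, hq1, hq⟩ := exists_diagonal_along_fdist_eq hp
        (by simp only [fdist_def] at hp; omega)
      exact .head (openAdj_of_far hΛ hη h1 h2 (by omega)) (ih q hq (by omega))

lemma connectedIn_of_far (hΛ : IsDiamond v n) (hη : SIok (deltaOf v n) wiredwired η)
    (hp : n ≤ fdist p v) (hq : n ≤ fdist q v)
    (hpq : (p.1 + p.2) % 2 = (q.1 + q.2) % 2) : ConnectedIn η p q := by
  have hv := hΛ.1
  have hn := hΛ.2.1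
  have hdist : fdist p v % 2 = fdist q v % 2 := by
    rw [Int.even_iff] at hv
    simp only [fdist_def]
    omega
  obtain ⟨p', hpp', hp'⟩ := exists_connectedIn_fdist_add hΛ hη hp (fdist q v)
  obtain ⟨q', hqq', hq'⟩ :=
    exists_connectedIn_fdist_add hΛ hη hq ((fdist p v + fdist q v) / 2)
  have hp'' := connectedIn_of_fdist_eq hΛ hη (m := fdist p v + 2 * fdist q v) (by omega) hp'
  have hq'' := connectedIn_of_fdist_eq hΛ hη (p := q') (m := fdist p v + 2 * fdist q v)
    (by omega) (by omega)
  exact (hpp'.trans hp'').trans (hqq'.trans hq'').symm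

def innerClusters (v : Face) (n : ℕ) (η : SIConf) : Set (Set Face) :=
  {C | (∃ p, C = cluster η p) ∧ ∀ q ∈ C, fdist q v < n}

lemma finite_innerClusters (v : Face) (n : ℕ) (η : SIConf) : (innerClusters v n η).Finite :=
  ((finite_fdist_le v n).image (cluster η)).subset <| by
    rintro C ⟨⟨p, rfl⟩, hC⟩
    exact ⟨p, (hC p (mem_cluster_self η p)).le, rfl⟩

lemma touchesDelta_of_crossInDelta {x : Vx} (hx : CrossInDelta v n x) :
    TouchesDelta (deltaOf v n) x :=
  ⟨(x, false), hx, .inr rfl⟩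

lemma touchesDelta_of_fdist_lt (hΛ : IsDiamond v n) (hp : fdist p v < n) :
    TouchesDelta (deltaOf v n) p := by
  refine ⟨(p + (1, 1), false), (crossInDelta_iff hΛ _).mpr ?_, .inl (by simp [ep_false])⟩
  simp only [fdist_def, Prod.fst_sub, Prod.snd_sub, Prod.fst_add, Prod.snd_add] at hp ⊢
  omega

lemma cluster_mem_innerClusters_or (hΛ : IsDiamond v n) (hη : SIok (deltaOf v n) wiredwired η)
    (p : Face) : cluster η p ∈ innerClusters v n η ∨
    cluster η p = cluster η (v.1 + n, v.2) ∨ cluster η p = cluster η (v.1 + n, v.2 + 1) := by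
  by_cases hin : ∀ q ∈ cluster η p, fdist q v < n
  · exact .inl ⟨⟨p, rfl⟩, hin⟩
  push Not at hin
  obtain ⟨q, hpq, hq⟩ := hin
  have hv := hΛ.1
  rw [Int.even_iff] at hv
  have hn := hΛ.2.2
  rw [Nat.even_iff] at hn
  rw [cluster_eq_of_connectedIn hpq]
  refine .inr (Or.imp (fun h => ?_) (fun h => ?_) (Int.emod_two_eq_zero_or_one (q.1 + q.2)))
    <;>
    refine cluster_eq_of_connectedIn (connectedIn_of_far hΛ hη hq ?_ ?_) <;>
    simp only [fdist_def] <;> omega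

theorem kDelta_eq (hΛ : IsDiamond v n) (hη : SIok (deltaOf v n) wiredwired η) :
    kDelta (deltaOf v n) η = (innerClusters v n η).ncard + 2 := by
  have hn := hΛ.2.1
  have hcorner : ∀ y : ℤ, 0 ≤ y → y ≤ 1 → TouchesDelta (deltaOf v n) (v.1 + n, v.2 + y) ∧
      cluster η (v.1 + n, v.2 + y) ∉ innerClusters v n η := by
    intro y hy0 hy1
    refine ⟨touchesDelta_of_crossInDelta ((crossInDelta_iff hΛ _).mpr ?_), fun h => ?_⟩
    · simp only [fdist_def, Prod.fst_sub, Prod.snd_sub]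
      omega
    · have := h.2 _ (mem_cluster_self η _)
      simp only [fdist_def] at this
      omega
  obtain ⟨h₀, hin₀⟩ := hcorner 0 le_rfl zero_le_one
  obtain ⟨h₁, hin₁⟩ := hcorner 1 zero_le_one le_rfl
  rw [add_zero] at h₀ hin₀
  have hne : cluster η (v.1 + n, v.2) ≠ cluster η (v.1 + n, v.2 + 1) := fun h => by
    have hmem : (v.1 + n, v.2 + 1) ∈ cluster η (v.1 + n, v.2) := h ▸ mem_cluster_self η _
    have := hmem.parity_eq
    omega
  have hset : {C | ∃ p, TouchesDelta (deltaOf v n) p ∧ C = cluster η p} =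
      innerClusters v n η ∪ {cluster η (v.1 + n, v.2), cluster η (v.1 + n, v.2 + 1)} := by
    ext C
    constructor
    · rintro ⟨p, -, rfl⟩
      exact (cluster_mem_innerClusters_or hΛ hη p).imp_right id
    · rintro (⟨⟨p, rfl⟩, hC⟩ | rfl | rfl)
      exacts [⟨p, touchesDelta_of_fdist_lt hΛ (hC p (mem_cluster_self η p)), rfl⟩,
        ⟨_, h₀, rfl⟩, ⟨_, h₁, rfl⟩]
  rw [kDelta, hset, Set.ncard_union_eq _ (finite_innerClusters v n η) (Set.toFinite _),
    Set.ncard_pair hne]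
  rw [Set.disjoint_right]
  rintro C (rfl | rfl)
  exacts [hin₀, hin₁]

lemma iceRule_of_compat {σ : SpinConf} (hη : NoClosedCross η) (hσ : Compat σ η) :
    IceRule σ :=
  fun x => (hη x).imp (hσ (x, false)) (hσ (x, true))

open Classical in
noncomputable def spinOfInner (i j : Bool) (g : innerClusters v n η → Bool) : SpinConf :=
  fun p => if h : cluster η p ∈ innerClusters v n η then g ⟨_, h⟩ else boundarySpin i j p

lemma spinOfInner_compat (g : innerClusters v n η → Bool) :
    Compat (spinOfInner (v := v) (n := n) i j g) η := by
  intro e he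
  have hconn : ConnectedIn η (ep e).1 (ep e).2 := .single ⟨e, he, .inl rfl⟩
  have hcl := cluster_eq_of_connectedIn hconn
  unfold spinOfInner
  by_cases h : cluster η (ep e).2 ∈ innerClusters v n η
  · rw [dif_pos (by rwa [hcl]), dif_pos h]
    exact congrArg g (Subtype.ext hcl)
  · rw [dif_neg (by rwa [hcl]), dif_neg h]
    exact boundarySpin_congr hconn.parity_eq

noncomputable def compatSpinEquiv (hη : NoClosedCross η) :
    {σ // OmegaSpin v n i j σ ∧ Compat σ η} ≃ (innerClusters v n η → Bool) where
  toFun σ C := σ.1 C.2.1.choose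
  invFun g := ⟨spinOfInner i j g, ⟨iceRule_of_compat hη (spinOfInner_compat g), fun p hp => by
    rw [spinOfInner, dif_neg fun h => (h.2 p (mem_cluster_self η p)).not_ge hp]
    rfl⟩, spinOfInner_compat g⟩
  left_inv σ := by
    refine Subtype.ext (funext fun p => ?_)
    dsimp only [spinOfInner]
    split_ifs with h
    · have hp : p ∈ cluster η h.1.choose := h.1.choose_spec ▸ mem_cluster_self η p
      exact hp.spin_eq σ.2.2
    · have : ∃ q ∈ cluster η p, n ≤ fdist q v := by
        by_contra! hq
        exact h ⟨⟨p, rfl⟩, hq⟩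
      obtain ⟨q, hpq, hq⟩ := this
      rw [hpq.spin_eq σ.2.2, σ.2.1.2 q hq]
      exact boundarySpin_congr hpq.parity_eq
  right_inv g := funext fun C => by
    have h : cluster η C.2.1.choose ∈ innerClusters v n η := C.2.1.choose_spec ▸ C.2
    simp only [spinOfInner, dif_pos h]
    exact congrArg g (Subtype.ext C.2.1.choose_spec.symm)

theorem four_mul_tsum_compat (hΛ : IsDiamond v n) (hη : SIok (deltaOf v n) wiredwired η)
    (w : ℝ≥0∞) :
    4 * ∑' _ : {σ // OmegaSpin v n i j σ ∧ Compat σ η}, w =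
      2 ^ kDelta (deltaOf v n) η * w := by
  have := (finite_innerClusters v n η).to_subtype
  rw [ENNReal.tsum_const, ENat.card_congr (compatSpinEquiv hη.1), ENat.card_eq_coe_natCard,
    Nat.card_fun, Nat.card_coe_set_eq, Nat.card_eq_fintype_card, Fintype.card_bool,
    kDelta_eq hΛ hη, pow_add]
  push_cast
  ring

lemma SIweight_two (Δ : Set Edge) {α : ℝ} (hα : 0 ≤ α) (η : SIConf) :
    SIweight Δ α 2 η = 2 ^ kDelta Δ η * ENNReal.ofReal (α ^ NDelta Δ η) := by
  rw [SIweight, ENNReal.ofReal_mul (pow_nonneg hα _), ENNReal.ofReal_pow zero_le_two,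
    ENNReal.ofReal_ofNat, mul_comm]

lemma tsum_okPair_fiber_fst (hΛ : IsDiamond v n) {c : ℝ} (hc : 2 ≤ c) {σ : SpinConf}
    (hσ : OmegaSpin v n i j σ) :
    ∑' η : {η // OkPair v n i j (σ, η)}, ENNReal.ofReal ((c - 2) ^ NDelta (deltaOf v n) η) =
      spinWeight v n c σ :=
  ((Equiv.subtypeEquivRight fun _ => and_iff_right hσ).tsum_eq
    fun η => ENNReal.ofReal ((c - 2) ^ NDelta (deltaOf v n) η.1)).trans
    (tsum_compat_eq_spinWeight hΛ hc hσ)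

lemma four_mul_tsum_okPair_fiber_snd (hΛ : IsDiamond v n) {α : ℝ} (hα : 0 ≤ α)
    (hη : SIok (deltaOf v n) wiredwired η) :
    4 * ∑' _ : {σ // OkPair v n i j (σ, η)}, ENNReal.ofReal (α ^ NDelta (deltaOf v n) η) =
      SIweight (deltaOf v n) α 2 η := by
  rw [SIweight_two _ hα, ← four_mul_tsum_compat (i := i) hΛ hη]
  congr 1
  exact (Equiv.subtypeEquivRight fun _ => and_congr_right fun _ => and_iff_right hη).tsum_eq
    fun _ => _

lemma couplingFin_eq (v : Face) (n : ℕ) (α : ℝ) (i j : Bool) :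
    couplingFin v n α i j = normalizedWeightedCount (OkPair v n i j)
      (fun p => ENNReal.ofReal (α ^ NDelta (deltaOf v n) p.2)) :=
  rfl

lemma spinFin_eq (v : Face) (n : ℕ) (c : ℝ) (i j : Bool) :
    spinFin v n c i j = normalizedWeightedCount (OmegaSpin v n i j) (spinWeight v n c) :=
  rfl

lemma SIfin_eq (Δ : Set Edge) (α q : ℝ) (τ : SIConf) :
    SIfin Δ α q τ = normalizedWeightedCount (SIok Δ τ) (SIweight Δ α q) :=
  rfl

/-- Let `c > 2`, `α = c - 2`, `i, j ∈ {+,-}`, `Λ` a diamond domain and `Δ = Δ(Λ)`.  The first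
marginal of `P̄^{ij}_{Λ,α}` is the spin measure `P^{spin,ij}_{Λ,c}` and the second marginal is
the superimposed measure `P^{SI,11}_{Δ,α,2}`. -/
theorem stmt_12 (c : ℝ) (hc : 2 < c) (i j : Bool) (v : Face) (n : ℕ) (hΛ : IsDiamond v n) :
    Measure.map Prod.fst (couplingFin v n (c - 2) i j) = spinFin v n c i j ∧
    Measure.map Prod.snd (couplingFin v n (c - 2) i j) =
      SIfin (deltaOf v n) (c - 2) 2 wiredwired := by
  rw [couplingFin_eq, spinFin_eq, SIfin_eq]
  exact ⟨map_fst_normalizedWeightedCount one_ne_zero ENNReal.one_ne_top (fun _ hp => hp.1)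
      fun σ hσ => (one_mul _).trans (tsum_okPair_fiber_fst hΛ hc.le hσ),
    map_snd_normalizedWeightedCount four_ne_zero ENNReal.ofNat_ne_top (fun _ hp => hp.2.1)
      fun η hη => four_mul_tsum_okPair_fiber_snd hΛ (by linarith) hη⟩

end SixVertex
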